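/- The twenty-eight unordered pairs listed as edges of the link graph Λ₂ of X₂ are pairwise distinct, and the simple graph Λ₂ contains no cycle of length 3; that is, Λ₂ has no circuits of combinatorial length less than 4, so the squared complex X₂ is non-positively curved. -/
import Mathlib


/-- Vertices of the link graph of the LOF complex: `(false, i, ε)` stands for
`a_{i+1}⁺`/`a_{i+1}⁻` (according to `ε = true`/`false`) and `(true, i, ε)` stands for
`b_{i+1}⁺`/`b_{i+1}⁻` (so `i : Fin 4` indexes `a_1,…,a_4` and `b_1,…,b_4`). -/
abbrev LofV : Type := Bool × Fin 4 × Bool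

/-- `a_{i+1}⁺`. -/
def aP (i : Fin 4) : LofV := (false, i, true)
/-- `a_{i+1}⁻`. -/
def aM (i : Fin 4) : LofV := (false, i, false)
/-- `b_{i+1}⁺`. -/
def bP (i : Fin 4) : LofV := (true, i, true)
/-- `b_{i+1}⁻`. -/
def bM (i : Fin 4) : LofV := (true, i, false)

/-- The six squares of the LOF complex `X`, each contributing four corner edges to the
link graph, grouped by the relator contributing them:
`b_2 a_1 b_2⁻¹ a_4⁻¹`, `b_3 a_2 b_3⁻¹ a_4⁻¹`, `b_1 a_4 b_1⁻¹ a_3⁻¹`,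
`a_2 b_1 a_2⁻¹ b_4⁻¹`, `a_3 b_2 a_3⁻¹ b_4⁻¹`, `a_1 b_4 a_1⁻¹ b_3⁻¹`. -/
def lofSquares : List (List (Sym2 LofV)) :=
  [ [ s(bP 1, aM 0), s(aP 0, bP 1), s(bM 1, aP 3), s(aM 3, bM 1) ],
    [ s(bP 2, aM 1), s(aP 1, bP 2), s(bM 2, aP 3), s(aM 3, bM 2) ],
    [ s(bP 0, aM 3), s(aP 3, bP 0), s(bM 0, aP 2), s(aM 2, bM 0) ],
    [ s(aP 1, bM 0), s(bP 0, aP 1), s(aM 1, bP 3), s(bM 3, aM 1) ],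
    [ s(aP 2, bM 1), s(bP 1, aP 2), s(aM 2, bP 3), s(bM 3, aM 2) ],
    [ s(aP 0, bM 3), s(bP 3, aP 0), s(aM 0, bP 2), s(bM 2, aM 0) ] ]

/-- The twenty-four edges of the link graph `Λ_F` of the LOF complex `X`. -/
def lofEdges : List (Sym2 LofV) := lofSquares.flatten

/-- The link graph `Λ_F`. -/
def lofGraph : SimpleGraph LofV :=
  SimpleGraph.fromEdgeSet {e | e ∈ lofEdges}

/-- The twenty-eight edges of the link graph `Λ₂` of `X₂`: the twenty-four edges of the
LOF link `Λ_F` together with the four edges `{b_4⁺,a_1⁻}`, `{b_4⁻,a_4⁻}`, `{a_4⁺,b_1⁻}`,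
`{a_1⁺,b_1⁺}` contributed by the attached square with boundary word `a_4 b_1 a_1⁻¹ b_4⁻¹`. -/
def link2Edges : List (Sym2 LofV) :=
  lofEdges ++ [ s(bP 3, aM 0), s(bM 3, aM 3), s(aP 3, bM 0), s(aP 0, bP 0) ]

/-- The link graph `Λ₂`. -/
def link2Graph : SimpleGraph LofV :=
  SimpleGraph.fromEdgeSet {e | e ∈ link2Edges}

instance : DecidableRel link2Graph.Adj := fun a b =>
  decidable_of_iff (s(a, b) ∈ link2Edges ∧ a ≠ b) (by
    simp [link2Graph, SimpleGraph.fromEdgeSet_adj, Set.mem_setOf_eq])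

lemma link2_triangle_free :
    ∀ x y z : LofV,
      ¬(link2Graph.Adj x y ∧ link2Graph.Adj y z ∧ link2Graph.Adj z x) := by
  decide

/-- The twenty-eight unordered pairs listed as edges of `Λ₂` are pairwise
distinct, and `Λ₂` contains no cycle of length 3; that is, `Λ₂` has no circuits of
combinatorial length less than 4, so the squared complex `X₂` is non-positively
curved. -/
theorem link2_is_large :
    link2Edges.Nodup ∧
    (∀ (v : LofV) (w : link2Graph.Walk v v), w.IsCycle → w.length ≠ 3) ∧
    (∀ (v : LofV) (w : link2Graph.Walk v v), w.IsCycle → 4 ≤ w.length) := by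
  have h3 : ∀ (v : LofV) (w : link2Graph.Walk v v), w.IsCycle → w.length ≠ 3 := by
    intro v w hc hl
    match w, hl with
    | .cons h1 (.cons h2 (.cons h3 .nil)), _ =>
      exact link2_triangle_free _ _ _ ⟨h1, h2, h3⟩
  refine ⟨by decide, h3, ?_⟩
  intro v w hc
  have := hc.three_le_length
  have := h3 v w hc
  omega
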